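/- arXiv:0909.3185 — 3 statements merged into one kernel-verified Lean document; each statement's English description precedes it below -/
import Mathlib

section
/- Let X and Y be ℤ₂ℤ₄-additive codes in ℤ₂^α × ℤ₄^β with minimum Lee distances d_X and d_Y. Then the Plotkin construction code C = {(u, u+v) : u ∈ X, v ∈ Y} has minimum Lee distance exactly min{2d_X, d_Y}, provided X and Y are nonzero. -/
open Finset

/-- The Gray map `φ : ℤ₄ → ℤ₂²`. -/
def grayMap (x : ZMod 4) : ZMod 2 × ZMod 2 :=
  if x = 0 then (0, 0) else if x = 1 then (0, 1) else if x = 2 then (1, 1) else (1, 0)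

/-- Lee weight on `ℤ₄`: `wL(0)=0, wL(1)=1, wL(2)=2, wL(3)=1`. -/
def leeWt4 (x : ZMod 4) : ℕ := min x.val (4 - x.val)

/-- Hamming distance on `ℤ₂²`. -/
def hamDist2 (x y : ZMod 2 × ZMod 2) : ℕ :=
  (if x.1 = y.1 then 0 else 1) + (if x.2 = y.2 then 0 else 1)

/-- The ambient space `ℤ₂^a × ℤ₄^b`. -/
abbrev Vec (a b : ℕ) := (Fin a → ZMod 2) × (Fin b → ZMod 4)

/-- Hamming weight of a binary vector. -/
def wtH {n : ℕ} (f : Fin n → ZMod 2) : ℕ := (univ.filter fun i => f i ≠ 0).card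

/-- Lee weight on `ℤ₂^a × ℤ₄^b`. -/
def leeWt {a b : ℕ} (w : Vec a b) : ℕ := wtH w.1 + ∑ j, leeWt4 (w.2 j)

/-- Lee distance on `ℤ₂^a × ℤ₄^b`. -/
def leeDist {a b : ℕ} (x y : Vec a b) : ℕ := leeWt (x - y)

/-- Minimum Lee distance (= minimum Lee weight of a nonzero element) of a set. -/
noncomputable def minLee {a b : ℕ} (S : Set (Vec a b)) : ℕ := sInf (leeWt '' (S \ {0}))

/-- Minimum Hamming distance of a (not necessarily linear) binary code. -/
noncomputable def minHam {n : ℕ} (S : Set (Fin n → ZMod 2)) : ℕ :=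
  sInf {d | ∃ x ∈ S, ∃ y ∈ S, x ≠ y ∧ hammingDist x y = d}

/-- The extended Gray map `Φ : ℤ₂^a × ℤ₄^b → ℤ₂^(a+2b)`. -/
def Phi {a b : ℕ} (x : Vec a b) : Fin (a + 2 * b) → ZMod 2 :=
  fun i =>
    if h : (i : ℕ) < a then x.1 ⟨i, h⟩
    else
      have hb : ((i : ℕ) - a) / 2 < b := by have := i.isLt; omega
      if ((i : ℕ) - a) % 2 = 0 then (grayMap (x.2 ⟨((i : ℕ) - a) / 2, hb⟩)).1
      else (grayMap (x.2 ⟨((i : ℕ) - a) / 2, hb⟩)).2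

/-- The Plotkin vector `(u , u + v)` in `ℤ₂^(2a) × ℤ₄^(2b)`. -/
def plVec {a b : ℕ} (u v : Vec a b) : Vec (a + a) (b + b) :=
  (Fin.append u.1 (u.1 + v.1), Fin.append u.2 (u.2 + v.2))

/-- The Plotkin construction `{(u, u+v) : u ∈ X, v ∈ Y}`. -/
def plotkinSet {a b : ℕ} (X Y : Set (Vec a b)) : Set (Vec (a + a) (b + b)) :=
  {w | ∃ u ∈ X, ∃ v ∈ Y, w = plVec u v}

/-! A nonzero codeword `(u, u + v)` has Lee weight `wt u + wt (u + v)`. If `v = 0` this is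
`2 wt u ≥ 2 d_X`; otherwise the triangle inequality gives `wt u + wt (u + v) ≥ wt v ≥ d_Y`.
Both bounds are attained, by `(x, x)` and `(0, y)` for codewords `x ∈ X`, `y ∈ Y` of minimum weight. -/

lemma Fin.append_eq_zero_iff {α : Type*} [Zero α] {m n : ℕ} {f : Fin m → α} {g : Fin n → α} :
    Fin.append f g = 0 ↔ f = 0 ∧ g = 0 := by
  refine ⟨fun h => ⟨funext fun i => ?_, funext fun i => ?_⟩, ?_⟩
  · simpa using congrFun h (Fin.castAdd n i)
  · simpa using congrFun h (Fin.natAdd m i)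
  · rintro ⟨rfl, rfl⟩
    funext i
    refine Fin.addCases (fun j => ?_) (fun j => ?_) i <;> simp

lemma AddSubgroup.diff_zero_nonempty {G : Type*} [AddGroup G] {H : AddSubgroup G} (hH : H ≠ ⊥) :
    ((H : Set G) \ {0}).Nonempty := by
  obtain ⟨x, hx, hx₀⟩ := H.bot_or_exists_ne_zero.resolve_left hH
  exact ⟨x, hx, hx₀⟩

lemma leeWt4_sub_le (x y : ZMod 4) : leeWt4 (x - y) ≤ leeWt4 x + leeWt4 y := by
  revert x y; decide

lemma wtH_sub_le {n : ℕ} (f g : Fin n → ZMod 2) : wtH (f - g) ≤ wtH f + wtH g :=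
  calc wtH (f - g) = hammingDist f g := by
        simp only [wtH, hammingDist, Pi.sub_apply, ne_eq, sub_eq_zero]
    _ ≤ hammingDist f 0 + hammingDist 0 g := hammingDist_triangle f 0 g
    _ = wtH f + wtH g := by rw [hammingDist_zero_right, hammingDist_zero_left]; rfl

lemma wtH_append {m n : ℕ} (f : Fin m → ZMod 2) (g : Fin n → ZMod 2) :
    wtH (Fin.append f g) = wtH f + wtH g := by
  simp only [wtH, card_filter, Fin.sum_univ_add, Fin.append_left, Fin.append_right]

lemma leeWt_zero {a b : ℕ} : leeWt (0 : Vec a b) = 0 := by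
  simp [leeWt, wtH, leeWt4]

lemma leeWt_sub_le {a b : ℕ} (w z : Vec a b) : leeWt (w - z) ≤ leeWt w + leeWt z := by
  have hbin := wtH_sub_le w.1 z.1
  have hquat : ∑ j, leeWt4 (w.2 j - z.2 j) ≤ ∑ j, leeWt4 (w.2 j) + ∑ j, leeWt4 (z.2 j) := by
    rw [← sum_add_distrib]
    exact sum_le_sum fun j _ => leeWt4_sub_le _ _
  simp only [leeWt, Prod.fst_sub, Prod.snd_sub, Pi.sub_apply]
  omega

section MinLee

variable {a b : ℕ} {S : Set (Vec a b)}

lemma minLee_le_leeWt {w : Vec a b} (hw : w ∈ S) (hw₀ : w ≠ 0) : minLee S ≤ leeWt w :=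
  Nat.sInf_le ⟨w, ⟨hw, hw₀⟩, rfl⟩

lemma exists_leeWt_eq_minLee (hS : (S \ {0}).Nonempty) :
    ∃ w ∈ S, w ≠ 0 ∧ leeWt w = minLee S := by
  obtain ⟨w, ⟨hw, hw₀⟩, hwt⟩ := Nat.sInf_mem (hS.image leeWt)
  exact ⟨w, hw, hw₀, hwt⟩

lemma le_minLee {d : ℕ} (hS : (S \ {0}).Nonempty) (h : ∀ w ∈ S, w ≠ 0 → d ≤ leeWt w) :
    d ≤ minLee S :=
  le_csInf (hS.image leeWt) (by rintro _ ⟨w, ⟨hw, hw₀⟩, rfl⟩; exact h w hw hw₀)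

end MinLee

section Plotkin

variable {a b : ℕ}

lemma leeWt_plVec (u v : Vec a b) : leeWt (plVec u v) = leeWt u + leeWt (u + v) := by
  simp only [leeWt, plVec, wtH_append, Prod.fst_add, Prod.snd_add, Pi.add_apply,
    Fin.sum_univ_add, Fin.append_left, Fin.append_right]
  ring

lemma plVec_eq_zero_iff {u v : Vec a b} : plVec u v = 0 ↔ u = 0 ∧ v = 0 := by
  simp only [plVec, Prod.ext_iff, Prod.fst_zero, Prod.snd_zero, Fin.append_eq_zero_iff]
  constructor <;> rintro ⟨⟨h₁, h₂⟩, h₃, h₄⟩ <;> simp_all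

variable {X Y : Set (Vec a b)}

lemma plVec_mem_plotkinSet {u v : Vec a b} (hu : u ∈ X) (hv : v ∈ Y) :
    plVec u v ∈ plotkinSet X Y :=
  ⟨u, hu, v, hv, rfl⟩

lemma min_le_leeWt_plVec {u v : Vec a b} (hu : u ∈ X) (hv : v ∈ Y) (hne : plVec u v ≠ 0) :
    min (2 * minLee X) (minLee Y) ≤ leeWt (plVec u v) := by
  rw [leeWt_plVec]
  by_cases hv₀ : v = 0
  · subst hv₀
    have hu₀ : u ≠ 0 := fun hu₀ => hne (plVec_eq_zero_iff.2 ⟨hu₀, rfl⟩)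
    have := minLee_le_leeWt hu hu₀
    rw [add_zero]
    omega
  · have hv_le : leeWt v ≤ leeWt (u + v) + leeWt u := by
      simpa using leeWt_sub_le (u + v) u
    have := minLee_le_leeWt hv hv₀
    omega

lemma minLee_plotkinSet_le_two_mul (hY₀ : 0 ∈ Y) (hX : (X \ {0}).Nonempty) :
    minLee (plotkinSet X Y) ≤ 2 * minLee X := by
  obtain ⟨x, hx, hx₀, hwt⟩ := exists_leeWt_eq_minLee hX
  calc minLee (plotkinSet X Y) ≤ leeWt (plVec x 0) :=
        minLee_le_leeWt (plVec_mem_plotkinSet hx hY₀) fun h => hx₀ (plVec_eq_zero_iff.1 h).1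
    _ = 2 * minLee X := by rw [leeWt_plVec, add_zero, hwt, two_mul]

lemma minLee_plotkinSet_le_minLee_right (hX₀ : 0 ∈ X) (hY : (Y \ {0}).Nonempty) :
    minLee (plotkinSet X Y) ≤ minLee Y := by
  obtain ⟨y, hy, hy₀, hwt⟩ := exists_leeWt_eq_minLee hY
  calc minLee (plotkinSet X Y) ≤ leeWt (plVec 0 y) :=
        minLee_le_leeWt (plVec_mem_plotkinSet hX₀ hy) fun h => hy₀ (plVec_eq_zero_iff.1 h).2
    _ = minLee Y := by rw [leeWt_plVec, zero_add, leeWt_zero, zero_add, hwt]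

theorem minLee_plotkinSet (hX₀ : 0 ∈ X) (hY₀ : 0 ∈ Y) (hX : (X \ {0}).Nonempty)
    (hY : (Y \ {0}).Nonempty) :
    minLee (plotkinSet X Y) = min (2 * minLee X) (minLee Y) := by
  refine le_antisymm
    (le_min (minLee_plotkinSet_le_two_mul hY₀ hX) (minLee_plotkinSet_le_minLee_right hX₀ hY))
    (le_minLee ?_ ?_)
  · obtain ⟨x, hx, hx₀⟩ := hX
    exact ⟨plVec x 0, plVec_mem_plotkinSet hx hY₀, fun h => hx₀ (plVec_eq_zero_iff.1 h).1⟩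
  · rintro _ ⟨u, hu, v, hv, rfl⟩ hne
    exact min_le_leeWt_plVec hu hv hne

end Plotkin

/-- for nonzero `ℤ₂ℤ₄`-additive codes `X, Y` with minimum Lee distances
`dX, dY`, the Plotkin code has minimum Lee distance exactly `min {2dX, dY}`. -/
theorem plotkin_min_distance (α β : ℕ) (X Y : AddSubgroup (Vec α β))
    (dX dY : ℕ) (hdX : minLee (X : Set (Vec α β)) = dX) (hdY : minLee (Y : Set (Vec α β)) = dY)
    (hX : X ≠ ⊥) (hY : Y ≠ ⊥) :
    minLee (plotkinSet (X : Set (Vec α β)) (Y : Set (Vec α β))) = min (2 * dX) dY := by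
  subst hdX hdY
  exact minLee_plotkinSet X.zero_mem Y.zero_mem (AddSubgroup.diff_zero_nonempty hX)
    (AddSubgroup.diff_zero_nonempty hY)
end

section
/- Define binary Reed-Muller style codes recursively over ℤ₂ via Plotkin: C(0,m) = repetition code of length 2^m, C(m,m) = ℤ₂^(2^m), and C(r,m) = {(u,u+v) : u ∈ C(r,m−1), v ∈ C(r−1,m−1)} for 0 < r < m. Then C(r,m) has dimension ∑_{i=0}^{r} binom(m,i) and minimum Hamming distance 2^(m−r). -/
open Finset

theorem pow2split (m : ℕ) : 2 ^ (m + 1) = 2 ^ m + 2 ^ m := by rw [pow_succ, mul_two]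

/-- Binary Reed–Muller style codes defined recursively via the Plotkin construction:
`C(0,m)` is the repetition code, `C(r,m) = ℤ₂^(2^m)` for `r ≥ m`, and
`C(r,m) = {(u,u+v) : u ∈ C(r,m−1), v ∈ C(r−1,m−1)}` for `0 < r < m`. -/
def RM : (m : ℕ) → ℕ → Set (Fin (2 ^ m) → ZMod 2)
  | 0, _ => Set.univ
  | m + 1, 0 => {x | ∃ c, ∀ i, x i = c}
  | m + 1, r + 1 =>
    if m + 1 ≤ r + 1 then Set.univ
    else {w | ∃ u ∈ RM m (r + 1), ∃ v ∈ RM m r,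
      w = Fin.append u (u + v) ∘ Fin.cast (pow2split m)}

/-! The Plotkin map `(u, v) ↦ (u | u + v)` is linear and injective, so the dimension of
`C(r, m+1)` is `dim C(r+1, m) + dim C(r, m)`, and Pascal's rule turns this into
`∑_{i ≤ r} binom(m, i)`. For distances, `d((u | u+v), (u' | u'+v')) = d(u, u') + d(u+v, u'+v')`:
this is `2 d(u, u')` when `v = v'`, and at least `d(v, v')` otherwise, since a coordinate where
`v` and `v'` differ is one where `u, u'` or `u+v, u'+v'` differ. Hence the Plotkin code has minimum
distance `min (2 d₁) d₂`, which equals `2^(m-r)` by induction; the recursion bottoms out at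
the full space (distance `1`) and the repetition code (distance `2^m`). -/

section Hamming

variable {ι β : Type*} [Fintype ι] [DecidableEq β]

theorem hammingDist_comp_equiv {κ : Type*} [Fintype κ] (σ : κ ≃ ι) (x y : ι → β) :
    hammingDist (x ∘ σ) (y ∘ σ) = hammingDist x y :=
  Finset.card_equiv σ (by simp)

theorem hammingDist_eq_card_of_forall_ne {x y : ι → β} (h : ∀ i, x i ≠ y i) :
    hammingDist x y = Fintype.card ι := by
  simp [hammingDist, h]

theorem Fin.hammingDist_append {a b : ℕ} (x x' : Fin a → β) (y y' : Fin b → β) :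
    hammingDist (Fin.append x y) (Fin.append x' y') = hammingDist x x' + hammingDist y y' := by
  simp only [hammingDist, Finset.card_filter, Fin.sum_univ_add, Fin.append_left, Fin.append_right]

theorem hammingDist_add_left_cancel [Add β] [IsLeftCancelAdd β] (u v v' : ι → β) :
    hammingDist (u + v) (u + v') = hammingDist v v' :=
  hammingDist_comp (fun i => (u i + ·)) fun i => add_right_injective (u i)

theorem hammingDist_add_right_cancel [Add β] [IsRightCancelAdd β] (u u' v : ι → β) :
    hammingDist (u + v) (u' + v) = hammingDist u u' :=
  hammingDist_comp (fun i => (· + v i)) fun i => add_left_injective (v i)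

theorem hammingDist_le_hammingDist_add_hammingDist_add [Add β] [IsLeftCancelAdd β]
    (u u' v v' : ι → β) :
    hammingDist v v' ≤ hammingDist u u' + hammingDist (u + v) (u' + v') := by
  classical
  refine (Finset.card_le_card fun i => ?_).trans (Finset.card_union_le _ _)
  simp only [Finset.mem_filter, Finset.mem_univ, true_and, Finset.mem_union, Pi.add_apply]
  contrapose!
  rintro ⟨hu, huv⟩
  rw [hu] at huv
  exact add_left_cancel huv

end Hamming

theorem Nat.sum_range_choose_of_le {m r : ℕ} (h : m ≤ r) :
    ∑ i ∈ Finset.range (r + 1), m.choose i = 2 ^ m := by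
  rw [← Nat.sum_range_choose m]
  refine (Finset.sum_subset (by simpa using h) fun i hi hi' => ?_).symm
  exact Nat.choose_eq_zero_of_lt (by simpa using hi')

theorem Nat.sum_range_choose_succ (m r : ℕ) :
    ∑ i ∈ Finset.range (r + 2), (m + 1).choose i
      = ∑ i ∈ Finset.range (r + 2), m.choose i + ∑ i ∈ Finset.range (r + 1), m.choose i := by
  rw [Finset.sum_range_succ' _ (r + 1), Finset.sum_range_succ' (m.choose ·) (r + 1)]
  simp only [Nat.choose_succ_succ, Nat.choose_zero_right, Finset.sum_add_distrib,
    Nat.succ_eq_add_one]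
  omega

theorem Submodule.coe_span_singleton_one_pi {R ι : Type*} [Semiring R] :
    ((R ∙ (1 : ι → R)) : Set (ι → R)) = {x | ∃ c, ∀ i, x i = c} := by
  ext x
  simp only [SetLike.mem_coe, Submodule.mem_span_singleton, Set.mem_ofPred_eq, funext_iff,
    Pi.smul_apply, Pi.one_apply, smul_eq_mul, mul_one, eq_comm]

section Plotkin

variable {R : Type*} [Ring R] {n N : ℕ}

/-- The `(u | u + v)` construction, with the index set `Fin (n + n)` transported along `e`. -/
def plotkin (e : N = n + n) : (Fin n → R) × (Fin n → R) →ₗ[R] Fin N → R where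
  toFun p := Fin.append p.1 (p.1 + p.2) ∘ Fin.cast e
  map_add' p q := by
    funext i
    simp only [Function.comp_apply, Pi.add_apply]
    generalize Fin.cast e i = j
    cases j using Fin.addCases <;>
      simp only [Fin.append_left, Fin.append_right, Prod.fst_add, Prod.snd_add, Pi.add_apply,
        add_add_add_comm]
  map_smul' c p := by
    funext i
    simp only [Function.comp_apply, Pi.smul_apply]
    generalize Fin.cast e i = j
    cases j using Fin.addCases <;>
      simp only [Fin.append_left, Fin.append_right, Prod.smul_fst, Prod.smul_snd, Pi.add_apply,
        Pi.smul_apply, smul_add, RingHom.id_apply]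

theorem plotkin_apply (e : N = n + n) (u v : Fin n → R) :
    plotkin e (u, v) = Fin.append u (u + v) ∘ Fin.cast e := rfl

theorem plotkin_injective (e : N = n + n) : Function.Injective (plotkin (R := R) e) := by
  refine (injective_iff_map_eq_zero _).2 fun ⟨u, v⟩ h => ?_
  have hu : u = 0 := funext fun i => by
    simpa [plotkin_apply] using congrFun h (Fin.cast e.symm (Fin.castAdd n i))
  have huv : u + v = 0 := funext fun i => by
    simpa only [plotkin_apply, Function.comp_apply, Fin.cast_cast, Fin.cast_eq_self,
      Fin.append_right, Pi.zero_apply] using congrFun h (Fin.cast e.symm (Fin.natAdd n i))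
  simp_all

theorem hammingDist_plotkin [DecidableEq R] (e : N = n + n) (u v u' v' : Fin n → R) :
    hammingDist (plotkin e (u, v)) (plotkin e (u', v'))
      = hammingDist u u' + hammingDist (u + v) (u' + v') := by
  rw [← Fin.hammingDist_append, ← hammingDist_comp_equiv (finCongr e)]
  rfl

def plotkinCode (e : N = n + n) (A B : Set (Fin n → R)) : Set (Fin N → R) :=
  {w | ∃ u ∈ A, ∃ v ∈ B, w = plotkin e (u, v)}

def Submodule.plotkin (e : N = n + n) (S T : Submodule R (Fin n → R)) :
    Submodule R (Fin N → R) :=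
  LinearMap.range (_root_.plotkin e ∘ₗ S.subtype.prodMap T.subtype)

theorem Submodule.coe_plotkin (e : N = n + n) (S T : Submodule R (Fin n → R)) :
    (S.plotkin e T : Set (Fin N → R)) = plotkinCode e S T := by
  ext w
  simp [Submodule.plotkin, plotkinCode, eq_comm]

theorem Submodule.finrank_plotkin {K : Type*} [DivisionRing K] (e : N = n + n)
    (S T : Submodule K (Fin n → K)) :
    Module.finrank K (S.plotkin e T) = Module.finrank K S + Module.finrank K T := by
  rw [Submodule.plotkin, LinearMap.finrank_range_of_inj, Module.finrank_prod]
  exact (plotkin_injective e).comp (S.injective_subtype.prodMap T.injective_subtype)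

end Plotkin

section MinHam

variable {n : ℕ} {S : Set (Fin n → ZMod 2)}

theorem minHam_le {x y : Fin n → ZMod 2} (hx : x ∈ S) (hy : y ∈ S) (hxy : x ≠ y) :
    minHam S ≤ hammingDist x y :=
  Nat.sInf_le ⟨x, hx, y, hy, hxy, rfl⟩

theorem exists_hammingDist_eq_minHam (h : minHam S ≠ 0) :
    ∃ x ∈ S, ∃ y ∈ S, x ≠ y ∧ hammingDist x y = minHam S :=
  Nat.sInf_mem (Nat.nonempty_of_pos_sInf (Nat.pos_of_ne_zero h))

theorem minHam_eq_of_forall_le {d : ℕ} (hd : ∃ x ∈ S, ∃ y ∈ S, x ≠ y ∧ hammingDist x y = d)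
    (h : ∀ x ∈ S, ∀ y ∈ S, x ≠ y → d ≤ hammingDist x y) : minHam S = d := by
  obtain ⟨x, hx, y, hy, hxy, rfl⟩ := hd
  refine le_antisymm (minHam_le hx hy hxy) (le_csInf ⟨_, x, hx, y, hy, hxy, rfl⟩ ?_)
  rintro _ ⟨x', hx', y', hy', hxy', rfl⟩
  exact h x' hx' y' hy' hxy'

theorem minHam_univ (hn : n ≠ 0) : minHam (Set.univ : Set (Fin n → ZMod 2)) = 1 := by
  refine minHam_eq_of_forall_le ⟨0, trivial, Pi.single ⟨0, by omega⟩ 1, trivial, ?_, ?_⟩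
    fun x _ y _ hxy => hammingDist_pos.2 hxy
  · simp [eq_comm (a := (0 : Fin n → ZMod 2)), Pi.single_eq_zero_iff]
  · rw [hammingDist_zero_left, hammingNorm]
    simp [Pi.single_apply, Finset.filter_eq']

theorem minHam_repetition (hn : n ≠ 0) :
    minHam {x : Fin n → ZMod 2 | ∃ c, ∀ i, x i = c} = n := by
  refine minHam_eq_of_forall_le
    ⟨fun _ => 0, ⟨0, fun _ => rfl⟩, fun _ => 1, ⟨1, fun _ => rfl⟩, ?_, ?_⟩ ?_
  · exact fun h => zero_ne_one (congrFun h ⟨0, by omega⟩)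
  · simpa using hammingDist_eq_card_of_forall_ne (ι := Fin n) fun _ => zero_ne_one
  · rintro x ⟨c, hc⟩ y ⟨c', hc'⟩ hxy
    have hcc' : c ≠ c' := by
      rintro rfl
      exact hxy (funext fun i => (hc i).trans (hc' i).symm)
    have hne : ∀ i, x i ≠ y i := fun i => by rw [hc, hc']; exact hcc'
    simpa using (hammingDist_eq_card_of_forall_ne hne).ge

theorem minHam_plotkinCode {N : ℕ} (e : N = n + n) {A B : Set (Fin n → ZMod 2)}
    (hA : minHam A ≠ 0) (hB : minHam B ≠ 0) :
    minHam (plotkinCode e A B) = min (2 * minHam A) (minHam B) := by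
  obtain ⟨a, ha, a', ha', haa', hda⟩ := exists_hammingDist_eq_minHam hA
  obtain ⟨b, hb, b', hb', hbb', hdb⟩ := exists_hammingDist_eq_minHam hB
  refine minHam_eq_of_forall_le ?_ ?_
  · rcases le_total (2 * minHam A) (minHam B) with hle | hle
    · refine ⟨_, ⟨a, ha, b, hb, rfl⟩, _, ⟨a', ha', b, hb, rfl⟩,
        (plotkin_injective e).ne (by simpa using haa'), ?_⟩
      rw [hammingDist_plotkin, hammingDist_add_right_cancel, hda, min_eq_left hle, two_mul]
    · refine ⟨_, ⟨a, ha, b, hb, rfl⟩, _, ⟨a, ha, b', hb', rfl⟩,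
        (plotkin_injective e).ne (by simpa using hbb'), ?_⟩
      rw [hammingDist_plotkin, hammingDist_self, hammingDist_add_left_cancel, hdb,
        min_eq_right hle, zero_add]
  · rintro _ ⟨u, hu, v, hv, rfl⟩ _ ⟨u', hu', v', hv', rfl⟩ hne
    rw [hammingDist_plotkin]
    by_cases hvv' : v = v'
    · subst hvv'
      have huu' : u ≠ u' := by rintro rfl; exact hne rfl
      rw [hammingDist_add_right_cancel]
      have := minHam_le hu hu' huu'
      omega
    · have := minHam_le hv hv' hvv'
      have := hammingDist_le_hammingDist_add_hammingDist_add u u' v v'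
      omega

end MinHam

@[elab_as_elim]
theorem RM.induction {motive : ℕ → ℕ → Prop} (of_le : ∀ m r, m ≤ r → motive m r)
    (succ_zero : ∀ m, motive (m + 1) 0)
    (succ_succ : ∀ m r, r < m → motive m (r + 1) → motive m r → motive (m + 1) (r + 1))
    (m r : ℕ) : motive m r := by
  induction m generalizing r with
  | zero => exact of_le 0 r r.zero_le
  | succ m ih =>
    rcases le_or_gt (m + 1) r with h | h
    · exact of_le _ _ h
    · cases r with
      | zero => exact succ_zero m
      | succ r => exact succ_succ m r (by omega) (ih _) (ih _)

theorem RM_eq_univ_of_le {m r : ℕ} (h : m ≤ r) : RM m r = Set.univ := by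
  cases m with
  | zero => rfl
  | succ m =>
    cases r with
    | zero => omega
    | succ r => rw [RM, if_pos h]

theorem RM_succ_zero (m : ℕ) : RM (m + 1) 0 = {x | ∃ c, ∀ i, x i = c} := rfl

theorem RM_succ_succ_of_lt {m r : ℕ} (h : r < m) :
    RM (m + 1) (r + 1) = plotkinCode (pow2split m) (RM m (r + 1)) (RM m r) := by
  rw [RM, if_neg (by omega)]
  rfl

theorem exists_submodule_coe_eq_RM (m r : ℕ) :
    ∃ S : Submodule (ZMod 2) (Fin (2 ^ m) → ZMod 2),
      (S : Set (Fin (2 ^ m) → ZMod 2)) = RM m r ∧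
        Module.finrank (ZMod 2) S = ∑ i ∈ Finset.range (r + 1), m.choose i := by
  induction m, r using RM.induction with
  | of_le m r h =>
    refine ⟨⊤, by rw [Submodule.top_coe, RM_eq_univ_of_le h], ?_⟩
    rw [finrank_top, Module.finrank_fin_fun, Nat.sum_range_choose_of_le h]
  | succ_zero m =>
    refine ⟨_, Submodule.coe_span_singleton_one_pi.trans (RM_succ_zero m).symm, ?_⟩
    simp [finrank_span_singleton one_ne_zero]
  | succ_succ m r h ih₁ ih₂ =>
    obtain ⟨S, hS, hdimS⟩ := ih₁
    obtain ⟨T, hT, hdimT⟩ := ih₂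
    refine ⟨S.plotkin (pow2split m) T, ?_, ?_⟩
    · rw [Submodule.coe_plotkin, hS, hT, RM_succ_succ_of_lt h]
    · rw [Submodule.finrank_plotkin, hdimS, hdimT, Nat.sum_range_choose_succ]

theorem minHam_RM (m r : ℕ) : minHam (RM m r) = 2 ^ (m - r) := by
  induction m, r using RM.induction with
  | of_le m r h =>
    rw [RM_eq_univ_of_le h, minHam_univ (by positivity), Nat.sub_eq_zero_of_le h, pow_zero]
  | succ_zero m => rw [RM_succ_zero, minHam_repetition (by positivity), Nat.sub_zero]
  | succ_succ m r h ih₁ ih₂ =>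
    rw [RM_succ_succ_of_lt h, minHam_plotkinCode _ (by rw [ih₁]; positivity)
      (by rw [ih₂]; positivity), ih₁, ih₂, ← pow_succ', Nat.sub_add_eq, Nat.sub_add_cancel
      (Nat.sub_pos_of_lt h), min_self, Nat.add_sub_add_right]

theorem RM_dim_and_distance_general (m r : ℕ) :
    (∃ S : Submodule (ZMod 2) (Fin (2 ^ m) → ZMod 2),
        (S : Set (Fin (2 ^ m) → ZMod 2)) = RM m r ∧
        Module.finrank (ZMod 2) S = ∑ i ∈ Finset.range (r + 1), m.choose i) ∧
      minHam (RM m r) = 2 ^ (m - r) :=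
  ⟨exists_submodule_coe_eq_RM m r, minHam_RM m r⟩

/-- `C(r,m)` is a linear code of dimension `∑_{i=0}^r binom(m,i)` and
minimum Hamming distance `2^(m−r)`. -/
theorem RM_dim_and_distance (m r : ℕ) (h : r ≤ m) :
    (∃ S : Submodule (ZMod 2) (Fin (2 ^ m) → ZMod 2),
        (S : Set (Fin (2 ^ m) → ZMod 2)) = RM m r ∧
        Module.finrank (ZMod 2) S = ∑ i ∈ Finset.range (r + 1), m.choose i) ∧
      minHam (RM m r) = 2 ^ (m - r) :=
  RM_dim_and_distance_general m r
end

section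
/- For the BA-Plotkin construction applied to codes X, Y, Z of types (α,β;γ',δ'), (α,β;γ'',δ''), (α,β;γ''',δ'''), the resulting code has type (2α, α+4β; γ'+γ''', δ'+γ''+2δ''+δ'''); in particular its cardinality is 2^{γ'+γ'''}·4^{δ'+γ''+2δ''+δ'''} and its binary length is 4α+8β. -/
open Finset

/-- Embedding `ℤ₂ → ℤ₄`, `0 ↦ 0`, `1 ↦ 1` (binary symbols read in `ℤ₄`). -/
def i24 (x : ZMod 2) : ZMod 4 := (x.val : ZMod 4)

/-- Doubling `ℤ₂ → ℤ₄`, `0 ↦ 0`, `1 ↦ 2` (the block `2g₂`). -/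
def dbl (x : ZMod 2) : ZMod 4 := 2 * (x.val : ZMod 4)

/-- A choice of half: `2 ↦ 1`, otherwise `0` (recovering `q'` from `2q'`). -/
def half4 (x : ZMod 4) : ZMod 4 := if x = 2 then 1 else 0

/-- Concatenation of five quaternary blocks. -/
def cat5 {a b c d e : ℕ} (p : Fin a → ZMod 4) (w : Fin b → ZMod 4) (x : Fin c → ZMod 4)
    (y : Fin d → ZMod 4) (z : Fin e → ZMod 4) : Fin (a + (b + (c + (d + e)))) → ZMod 4 :=
  Fin.append p (Fin.append w (Fin.append x (Fin.append y z)))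

/-- Ambient space `ℤ₂^(2a) × ℤ₄^(a+4b)` of the BA-Plotkin construction. -/
abbrev BAVec (a b : ℕ) := Vec (a + a) (a + (b + (b + (b + b))))

/-- Row `(g, g | 2g₂, q, q, q, q)` for a generator `(g|q)` of `X`. -/
def rowX {a b : ℕ} (g : Vec a b) : BAVec a b :=
  (Fin.append g.1 g.1, cat5 (fun k => dbl (g.1 k)) g.2 g.2 g.2 g.2)

/-- Row `(0, b | b, 0, 2q', q', 3q')` for an order-two generator `(b|2q')` of `Y`. -/
def rowY2 {a b : ℕ} (g : Vec a b) : BAVec a b :=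
  (Fin.append 0 g.1,
    cat5 (fun k => i24 (g.1 k)) 0 (2 • (half4 ∘ g.2)) (half4 ∘ g.2) (3 • (half4 ∘ g.2)))

/-- Row `(0, b | b, 0, q, 2q, 3q)` for an order-four generator `(b|q)` of `Y`. -/
def rowY4a {a b : ℕ} (g : Vec a b) : BAVec a b :=
  (Fin.append 0 g.1, cat5 (fun k => i24 (g.1 k)) 0 g.2 (2 • g.2) (3 • g.2))

/-- Row `(b, b | 0, 0, 0, q, q)` for an order-four generator `(b|q)` of `Y`. -/
def rowY4b {a b : ℕ} (g : Vec a b) : BAVec a b :=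
  (Fin.append g.1 g.1, cat5 0 0 0 g.2 g.2)

/-- Row `(0, g | 0, 0, 0, 0, q)` for a generator `(g|q)` of `Z`. -/
def rowZ {a b : ℕ} (g : Vec a b) : BAVec a b :=
  (Fin.append 0 g.1, cat5 0 0 0 0 g.2)

/-- The set of generators of the BA-Plotkin construction, built from standard
generator matrices of `X`, `Y`, `Z` given by group isomorphisms
`ℤ₂^γ × ℤ₄^δ ≃ X` etc. (order-two generators come from `(eᵢ, 0)`, order-four
generators from `(0, eⱼ)`). -/
def baGens {a b γX δX γY δY γZ δZ : ℕ} {X Y Z : AddSubgroup (Vec a b)}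
    (fX : Vec γX δX ≃+ X) (fY : Vec γY δY ≃+ Y) (fZ : Vec γZ δZ ≃+ Z) :
    Set (BAVec a b) :=
  (Set.range fun i : Fin γX => rowX ((fX (Pi.single i 1, 0) : X) : Vec a b)) ∪
  (Set.range fun j : Fin δX => rowX ((fX (0, Pi.single j 1) : X) : Vec a b)) ∪
  (Set.range fun i : Fin γY => rowY2 ((fY (Pi.single i 1, 0) : Y) : Vec a b)) ∪
  (Set.range fun j : Fin δY => rowY4a ((fY (0, Pi.single j 1) : Y) : Vec a b)) ∪
  (Set.range fun j : Fin δY => rowY4b ((fY (0, Pi.single j 1) : Y) : Vec a b)) ∪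
  (Set.range fun i : Fin γZ => rowZ ((fZ (Pi.single i 1, 0) : Z) : Vec a b)) ∪
  (Set.range fun j : Fin δZ => rowZ ((fZ (0, Pi.single j 1) : Z) : Vec a b))

/-!
Send the standard basis of `ℤ₂^(γ'+γ''') × ℤ₄^(δ'+γ''+2δ''+δ''')` to the rows of `G_BA`: the
order-two generators of `X` and `Z` to `ℤ₂`-coordinates, every other row to a `ℤ₄`-coordinate.
A row `(0, b | b, 0, 2q', q', 3q')` coming from an order-two generator `(b | 2q')` of `Y` has
order four, because `b` is read in `ℤ₄`. The code is the image of this homomorphism, so it remains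
to see that it is injective.

Reducing the first quaternary block mod 2 and subtracting the second quaternary block from the
third kills the rows of `X`, `Z` and the rows `(b, b | 0, 0, 0, q, q)`, and gives back the
generator of `Y` on the two other kinds of rows. On a kernel element it thus yields a vanishing
codeword of `Y`: the coefficients of the rows `(0, b | b, 0, q, 2q, 3q)` vanish and those of the
order-two rows are even. Twice an order-two row is `(0, 0 | 2b, 0, 0, 2q', 2q')`, which is
additive in the codeword, so what is left is a sum of additive images of codewords of `X`, `Y`,
`Z`, and comparing blocks forces all of them to vanish.
-/

namespace AddMonoidHom

variable {A B M : Type*} [AddCommGroup A] [AddCommGroup B] [AddCommGroup M]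

theorem range_coprod (f : A →+ M) (g : B →+ M) : (f.coprod g).range = f.range ⊔ g.range := by
  ext x
  simp [AddSubgroup.mem_sup, eq_comm]

end AddMonoidHom

namespace ZMod

variable {M : Type*} [AddCommGroup M] {k n : ℕ} [NeZero k]

def piLift (v : Fin n → M) (hv : ∀ i, k • v i = 0) : (Fin n → ZMod k) →+ M where
  toFun b := ∑ i, (b i).val • v i
  map_zero' := by simp
  map_add' b c := by
    rw [← sum_add_distrib]
    refine sum_congr rfl fun i _ => ?_
    rw [Pi.add_apply, ZMod.val_add, ← nsmul_eq_mod_nsmul _ (hv i), add_nsmul]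

theorem piLift_apply (v : Fin n → M) (hv : ∀ i, k • v i = 0) (b : Fin n → ZMod k) :
    piLift v hv b = ∑ i, (b i).val • v i := rfl

theorem piLift_single (v : Fin n → M) (hv : ∀ i, k • v i = 0) (i : Fin n) :
    piLift v hv (Pi.single i 1) = v i := by
  rw [piLift_apply, sum_eq_single i (fun j _ hj => by simp [hj]) (by simp), Pi.single_eq_same,
    ZMod.val_one_eq_one_mod, ← nsmul_eq_mod_nsmul _ (hv i), one_nsmul]

theorem range_piLift (v : Fin n → M) (hv : ∀ i, k • v i = 0) :
    (piLift v hv).range = AddSubgroup.closure (Set.range v) := by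
  refine le_antisymm ?_ ((AddSubgroup.closure_le _).2 ?_)
  · rintro _ ⟨b, rfl⟩
    rw [piLift_apply]
    exact AddSubgroup.sum_mem _ fun i _ =>
      AddSubgroup.nsmul_mem _ (AddSubgroup.subset_closure (Set.mem_range_self i)) _
  · rintro _ ⟨i, rfl⟩
    exact AddMonoidHom.mem_range.2 ⟨_, piLift_single v hv i⟩

theorem sum_val_nsmul_map_single {m : ℕ} (φ : (Fin n → ZMod m) →+ M) (b : Fin n → ZMod k) :
    ∑ i, (b i).val • φ (Pi.single i 1) = φ fun i => (b i).cast := by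
  simp_rw [← map_nsmul, ← map_sum]
  congr 1
  ext j
  rw [Finset.sum_apply, sum_eq_single j (fun i _ hij => by simp [hij.symm]) (by simp),
    Pi.smul_apply, Pi.single_eq_same, nsmul_eq_mul, mul_one, ZMod.natCast_val]

theorem piLift_eq (φ : (Fin n → ZMod k) →+ M) (hφ : ∀ i, k • φ (Pi.single i 1) = 0) :
    piLift (fun i => φ (Pi.single i 1)) hφ = φ := by
  ext b
  simp [piLift_apply, sum_val_nsmul_map_single, ZMod.cast_id]

theorem range_eq_closure_single (φ : (Fin n → ZMod k) →+ M) :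
    φ.range = AddSubgroup.closure (Set.range fun i => φ (Pi.single i 1)) := by
  have hφ (i : Fin n) : k • φ (Pi.single i 1) = 0 := by
    rw [← map_nsmul, ← Pi.single_smul', nsmul_eq_mul, ZMod.natCast_self, zero_mul, Pi.single_zero,
      map_zero]
  rw [← range_piLift _ hφ, piLift_eq]

end ZMod

def Fin.appendAddEquiv (m n : ℕ) (M : Type*) [AddCommMonoid M] :
    (Fin m → M) × (Fin n → M) ≃+ (Fin (m + n) → M) where
  __ := Fin.appendEquiv m n
  map_add' p q := by
    funext i
    refine Fin.addCases (fun i => ?_) (fun i => ?_) i <;> simp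

namespace BAPlotkin

abbrev SplitVec (a a' n₁ n₂ n₃ n₄ n₅ : ℕ) :=
  ((Fin a → ZMod 2) × (Fin a' → ZMod 2)) ×
    ((Fin n₁ → ZMod 4) × ((Fin n₂ → ZMod 4) × ((Fin n₃ → ZMod 4) ×
      ((Fin n₄ → ZMod 4) × (Fin n₅ → ZMod 4)))))

def SplitVec.appendEquiv (a a' n₁ n₂ n₃ n₄ n₅ : ℕ) :
    SplitVec a a' n₁ n₂ n₃ n₄ n₅ ≃+ Vec (a + a') (n₁ + (n₂ + (n₃ + (n₄ + n₅)))) :=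
  (Fin.appendAddEquiv a a' _).prodCongr <|
    ((AddEquiv.refl _).prodCongr <|
      ((AddEquiv.refl _).prodCongr <|
        ((AddEquiv.refl _).prodCongr (Fin.appendAddEquiv n₄ n₅ _)).trans
          (Fin.appendAddEquiv n₃ _ _)).trans (Fin.appendAddEquiv n₂ _ _)).trans
      (Fin.appendAddEquiv n₁ _ _)

theorem card_vec (a b : ℕ) : Nat.card (Vec a b) = 2 ^ a * 4 ^ b := by
  simp

theorem dbl_add (x y : ZMod 2) : dbl (x + y) = dbl x + dbl y := by
  revert x y; decide

theorem eq_of_dbl_add_dbl_eq_zero {x y : ZMod 2} : dbl x + dbl y = 0 → x = y := by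
  revert x y; decide

theorem two_nsmul_i24 (x : ZMod 2) : 2 • i24 x = dbl x := by
  revert x; decide

theorem val_dbl (x : ZMod 2) : (dbl x).val = 2 * x.val := by
  revert x; decide

theorem exists_dbl_eq_of_cast_eq_zero {x : ZMod 4} : (x.cast : ZMod 2) = 0 → ∃ y, dbl y = x := by
  revert x; decide

theorem cast_i24 (x : ZMod 2) : ((i24 x).cast : ZMod 2) = x := by
  revert x; decide

theorem cast_dbl (x : ZMod 2) : ((dbl x).cast : ZMod 2) = 0 := by
  revert x; decide

theorem two_nsmul_half4 {x : ZMod 4} : 2 • x = 0 → 2 • half4 x = x := by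
  revert x; decide

section Rows

variable {a b : ℕ}

abbrev BlockVec (a b : ℕ) := SplitVec a a a b b b b

def blockRowX : Vec a b →+ BlockVec a b where
  toFun g := ((g.1, g.1), (fun k => dbl (g.1 k), (g.2, (g.2, (g.2, g.2)))))
  map_zero' := by ext <;> simp [dbl]
  map_add' g h := by ext <;> simp [dbl_add]

def blockRowY2 (g : Vec a b) : BlockVec a b :=
  ((0, g.1), (fun k => i24 (g.1 k), (0, (2 • (half4 ∘ g.2), (half4 ∘ g.2, 3 • (half4 ∘ g.2))))))

def blockRowY4a (g : Vec a b) : BlockVec a b :=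
  ((0, g.1), (fun k => i24 (g.1 k), (0, (g.2, (2 • g.2, 3 • g.2)))))

def blockRowY4b : Vec a b →+ BlockVec a b where
  toFun g := ((g.1, g.1), (0, (0, (0, (g.2, g.2)))))
  map_zero' := rfl
  map_add' g h := by ext <;> simp

def blockRowZ : Vec a b →+ BlockVec a b where
  toFun g := ((0, g.1), (0, (0, (0, (0, g.2)))))
  map_zero' := rfl
  map_add' g h := by ext <;> simp

def doubleBlockRowY2 : Vec a b →+ BlockVec a b where
  toFun g := ((0, 0), (fun k => dbl (g.1 k), (0, (0, (g.2, g.2)))))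
  map_zero' := by ext <;> simp [dbl]
  map_add' g h := by ext <;> simp [dbl_add]

theorem four_nsmul_blockVec (v : BlockVec a b) : 4 • v = 0 := by
  have h2 : ∀ x : ZMod 2, 4 • x = 0 := by decide
  have h4 : ∀ x : ZMod 4, 4 • x = 0 := by decide
  ext <;> simp only [Prod.smul_fst, Prod.smul_snd, Pi.smul_apply, Prod.fst_zero, Prod.snd_zero,
    Pi.zero_apply, h2, h4]

theorem two_nsmul_blockRowY2 {g : Vec a b} (hg : 2 • g = 0) :
    2 • blockRowY2 g = doubleBlockRowY2 g := by
  have h2 : ∀ x : ZMod 2, 2 • x = 0 := by decide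
  have h4 : ∀ y : ZMod 4, 2 • 2 • y = 0 := by decide
  have h6 : ∀ x : ZMod 4, 2 • x = 0 → 2 • 3 • half4 x = x := by decide
  have hg₂ (k : Fin b) : 2 • g.2 k = 0 := congrFun (congrArg Prod.snd hg) k
  ext k <;> simp only [blockRowY2, doubleBlockRowY2, AddMonoidHom.coe_mk, ZeroHom.coe_mk,
    Prod.smul_mk, Pi.smul_apply, Function.comp_apply, smul_zero, Pi.zero_apply, h2]
  exacts [two_nsmul_i24 _, h4 _, two_nsmul_half4 (hg₂ k), h6 _ (hg₂ k)]

def yPart : BlockVec a b →+ Vec a b where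
  toFun v := (fun k => ((v.2.1 k).cast : ZMod 2), v.2.2.2.1 - v.2.2.1)
  map_zero' := by ext <;> simp
  map_add' v w := by
    ext k
    · exact ZMod.cast_add (show 2 ∣ 4 by norm_num) _ _
    · simp only [Prod.snd_add, Prod.fst_add, Pi.add_apply, Pi.sub_apply]
      abel

theorem yPart_blockRowX (g : Vec a b) : yPart (blockRowX g) = 0 := by
  ext k <;> simp [yPart, blockRowX, cast_dbl]

theorem yPart_blockRowY2 {g : Vec a b} (hg : 2 • g = 0) : yPart (blockRowY2 g) = g := by
  ext k
  · simp [yPart, blockRowY2, cast_i24]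
  · simpa [yPart, blockRowY2] using two_nsmul_half4 (congrFun (congrArg Prod.snd hg) k)

theorem yPart_blockRowY4a (g : Vec a b) : yPart (blockRowY4a g) = g := by
  ext k <;> simp [yPart, blockRowY4a, cast_i24]

theorem yPart_blockRowY4b (g : Vec a b) : yPart (blockRowY4b g) = 0 := by
  ext k <;> simp [yPart, blockRowY4b]

theorem yPart_blockRowZ (g : Vec a b) : yPart (blockRowZ g) = 0 := by
  ext k <;> simp [yPart, blockRowZ]

theorem eq_of_blockRows_sum_eq_zero {u s t w : Vec a b}
    (h : blockRowX u + doubleBlockRowY2 s + blockRowY4b t + blockRowZ w = 0) :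
    s + t = 0 ∧ u = (s.1, 0) ∧ w = 0 := by
  simp only [blockRowX, doubleBlockRowY2, blockRowY4b, blockRowZ, AddMonoidHom.coe_mk,
    ZeroHom.coe_mk, Prod.mk_add_mk, Prod.mk_eq_zero, add_zero, funext_iff, Pi.add_apply,
    Pi.zero_apply] at h
  obtain ⟨⟨hA₁, hA₂⟩, hB₁, hB₂, -, hB₄, hB₅⟩ := h
  have hu₁ (k : Fin a) : u.1 k = s.1 k := eq_of_dbl_add_dbl_eq_zero (hB₁ k)
  refine ⟨Prod.ext (funext fun k => ?_) (funext fun k => ?_), Prod.ext (funext hu₁) (funext hB₂),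
    Prod.ext (funext fun k => ?_) (funext fun k => ?_)⟩
  · show s.1 k + t.1 k = 0
    linear_combination hA₁ k - hu₁ k
  · show s.2 k + t.2 k = 0
    linear_combination hB₄ k - hB₂ k
  · show w.1 k = 0
    linear_combination hA₂ k - hA₁ k
  · show w.2 k = 0
    linear_combination hB₅ k - hB₄ k

end Rows

section Construction

variable {α β γ' δ' γ'' δ'' γ''' δ''' : ℕ} {X Y Z : AddSubgroup (Vec α β)}

def codeEmb {γ δ : ℕ} {W : AddSubgroup (Vec α β)} (f : Vec γ δ ≃+ W) : Vec γ δ →+ Vec α β :=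
  W.subtype.comp f.toAddMonoidHom

theorem codeEmb_injective {γ δ : ℕ} {W : AddSubgroup (Vec α β)} (f : Vec γ δ ≃+ W) :
    Function.Injective (codeEmb f) :=
  Subtype.coe_injective.comp f.injective

variable (fX : Vec γ' δ' ≃+ X) (fY : Vec γ'' δ'' ≃+ Y) (fZ : Vec γ''' δ''' ≃+ Z)

def yOrderTwoRows : (Fin γ'' → ZMod 4) →+ BlockVec α β :=
  ZMod.piLift (fun i => blockRowY2 (codeEmb fY (Pi.single i 1, 0))) fun _ => four_nsmul_blockVec _

def yOrderFourRows : (Fin δ'' → ZMod 4) →+ BlockVec α β :=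
  ZMod.piLift (fun j => blockRowY4a (codeEmb fY (0, Pi.single j 1))) fun _ => four_nsmul_blockVec _

def baPlotkinHom : SplitVec γ' γ''' δ' γ'' δ'' δ'' δ''' →+ BlockVec α β :=
  ((blockRowX.comp ((codeEmb fX).comp (.inl _ _))).coprod
      (blockRowZ.comp ((codeEmb fZ).comp (.inl _ _)))).coprod <|
    (blockRowX.comp ((codeEmb fX).comp (.inr _ _))).coprod <|
      (yOrderTwoRows fY).coprod <| (yOrderFourRows fY).coprod <|
        (blockRowY4b.comp ((codeEmb fY).comp (.inr _ _))).coprod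
          (blockRowZ.comp ((codeEmb fZ).comp (.inr _ _)))

theorem baPlotkinHom_apply (x₂ : Fin γ' → ZMod 2) (z₂ : Fin γ''' → ZMod 2)
    (x₄ : Fin δ' → ZMod 4) (b : Fin γ'' → ZMod 4) (c d : Fin δ'' → ZMod 4)
    (z₄ : Fin δ''' → ZMod 4) :
    baPlotkinHom fX fY fZ ((x₂, z₂), (x₄, (b, (c, (d, z₄))))) =
      blockRowX (codeEmb fX (x₂, x₄)) + yOrderTwoRows fY b + yOrderFourRows fY c +
        blockRowY4b (codeEmb fY (0, d)) + blockRowZ (codeEmb fZ (z₂, z₄)) := by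
  rw [← Prod.fst_add_snd (x₂, x₄), ← Prod.fst_add_snd (z₂, z₄)]
  simp only [baPlotkinHom, AddMonoidHom.coprod_apply, AddMonoidHom.comp_apply,
    AddMonoidHom.inl_apply, AddMonoidHom.inr_apply, map_add]
  abel

def blockGens : Set (BlockVec α β) :=
  (Set.range fun i : Fin γ' => blockRowX (codeEmb fX (Pi.single i 1, 0))) ∪
  (Set.range fun j : Fin δ' => blockRowX (codeEmb fX (0, Pi.single j 1))) ∪
  (Set.range fun i : Fin γ'' => blockRowY2 (codeEmb fY (Pi.single i 1, 0))) ∪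
  (Set.range fun j : Fin δ'' => blockRowY4a (codeEmb fY (0, Pi.single j 1))) ∪
  (Set.range fun j : Fin δ'' => blockRowY4b (codeEmb fY (0, Pi.single j 1))) ∪
  (Set.range fun i : Fin γ''' => blockRowZ (codeEmb fZ (Pi.single i 1, 0))) ∪
  (Set.range fun j : Fin δ''' => blockRowZ (codeEmb fZ (0, Pi.single j 1)))

-- `SplitVec.appendEquiv` sends each block row to the corresponding row of `G_BA` by definition.
theorem image_blockGens :
    SplitVec.appendEquiv α α α β β β β '' blockGens fX fY fZ = baGens fX fY fZ := by
  simp only [blockGens, Set.image_union, ← Set.range_comp]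
  rfl

theorem range_baPlotkinHom :
    (baPlotkinHom fX fY fZ).range = AddSubgroup.closure (blockGens fX fY fZ) := by
  simp only [baPlotkinHom, AddMonoidHom.range_coprod, ZMod.range_eq_closure_single,
    ← AddSubgroup.closure_union, AddMonoidHom.comp_apply, AddMonoidHom.inl_apply,
    AddMonoidHom.inr_apply, yOrderTwoRows, yOrderFourRows, ZMod.piLift_single]
  congr 1
  ext v
  simp only [blockGens, Set.mem_union]
  tauto

theorem two_nsmul_codeEmb_inl (u : Fin γ'' → ZMod 2) : 2 • codeEmb fY (u, 0) = 0 := by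
  have h2 : ∀ x : ZMod 2, 2 • x = 0 := by decide
  rw [← map_nsmul, Prod.smul_mk, smul_zero, show 2 • u = 0 from funext fun k => h2 (u k),
    Prod.mk_zero_zero, map_zero]

theorem yPart_yOrderTwoRows (b : Fin γ'' → ZMod 4) :
    yPart (yOrderTwoRows fY b) = codeEmb fY (fun i => (b i).cast, 0) := by
  simp only [yOrderTwoRows, ZMod.piLift_apply, map_sum, map_nsmul,
    yPart_blockRowY2 (two_nsmul_codeEmb_inl fY _)]
  exact ZMod.sum_val_nsmul_map_single ((codeEmb fY).comp (.inl _ _)) b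

theorem yPart_yOrderFourRows (c : Fin δ'' → ZMod 4) :
    yPart (yOrderFourRows fY c) = codeEmb fY (0, c) := by
  simp only [yOrderFourRows, ZMod.piLift_apply, map_sum, map_nsmul, yPart_blockRowY4a]
  refine (ZMod.sum_val_nsmul_map_single ((codeEmb fY).comp (.inr _ _)) c).trans ?_
  simp [ZMod.cast_id]

theorem yOrderTwoRows_dbl (b : Fin γ'' → ZMod 2) :
    yOrderTwoRows fY (fun i => dbl (b i)) = doubleBlockRowY2 (codeEmb fY (b, 0)) := by
  simp only [yOrderTwoRows, ZMod.piLift_apply, val_dbl, mul_nsmul,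
    two_nsmul_blockRowY2 (two_nsmul_codeEmb_inl fY _)]
  refine (ZMod.sum_val_nsmul_map_single
    (doubleBlockRowY2.comp ((codeEmb fY).comp (.inl _ _))) b).trans ?_
  simp [ZMod.cast_id]

theorem baPlotkinHom_injective : Function.Injective (baPlotkinHom fX fY fZ) := by
  refine (injective_iff_map_eq_zero _).2 ?_
  rintro ⟨⟨x₂, z₂⟩, x₄, b, c, d, z₄⟩ h
  rw [baPlotkinHom_apply] at h
  have hY : codeEmb fY (fun i => (b i).cast, c) = 0 := by
    have := congrArg yPart h
    simp only [map_add, map_zero, yPart_blockRowX, yPart_yOrderTwoRows, yPart_yOrderFourRows,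
      yPart_blockRowY4b, yPart_blockRowZ, zero_add, add_zero] at this
    rwa [← map_add, Prod.mk_add_mk, add_zero, zero_add] at this
  obtain ⟨hb, rfl⟩ := Prod.mk_eq_zero.1 ((map_eq_zero_iff _ (codeEmb_injective fY)).1 hY)
  obtain ⟨b, rfl⟩ : ∃ b' : Fin γ'' → ZMod 2, (fun i => dbl (b' i)) = b := by
    choose b' hb' using fun i => exists_dbl_eq_of_cast_eq_zero (congrFun hb i)
    exact ⟨b', funext hb'⟩
  rw [yOrderTwoRows_dbl, map_zero, add_zero] at h
  obtain ⟨hbd, hx, hz⟩ := eq_of_blockRows_sum_eq_zero h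
  rw [← map_add, Prod.mk_add_mk, add_zero, zero_add,
    map_eq_zero_iff _ (codeEmb_injective fY)] at hbd
  obtain ⟨rfl, rfl⟩ := Prod.mk_eq_zero.1 hbd
  rw [Prod.mk_zero_zero, map_zero, Prod.fst_zero, Prod.mk_zero_zero,
    map_eq_zero_iff _ (codeEmb_injective fX)] at hx
  rw [map_eq_zero_iff _ (codeEmb_injective fZ)] at hz
  obtain ⟨rfl, rfl⟩ := Prod.mk_eq_zero.1 hx
  obtain ⟨rfl, rfl⟩ := Prod.mk_eq_zero.1 hz
  simp [dbl, Pi.zero_def]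

end Construction

end BAPlotkin

open BAPlotkin

/-- the BA-Plotkin construction applied to codes `X, Y, Z` of types
`(α,β;γ',δ')`, `(α,β;γ'',δ'')`, `(α,β;γ''',δ''')` yields a code of type
`(2α, α+4β; γ'+γ''', δ'+γ''+2δ''+δ''')`; in particular its cardinality is
`2^(γ'+γ''')·4^(δ'+γ''+2δ''+δ''')` and its binary length is `4α+8β`. -/
theorem baPlotkin_type (α β γ' δ' γ'' δ'' γ''' δ''' : ℕ)
    (X Y Z : AddSubgroup (Vec α β))
    (fX : Vec γ' δ' ≃+ X) (fY : Vec γ'' δ'' ≃+ Y) (fZ : Vec γ''' δ''' ≃+ Z) :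
    let C : AddSubgroup (BAVec α β) := AddSubgroup.closure (baGens fX fY fZ)
    Nonempty (C ≃+ Vec (γ' + γ''') (δ' + γ'' + 2 * δ'' + δ''')) ∧
      Nat.card C = 2 ^ (γ' + γ''') * 4 ^ (δ' + γ'' + 2 * δ'' + δ''') ∧
      (α + α) + 2 * (α + (β + (β + (β + β)))) = 4 * α + 8 * β := by
  intro C
  let F := (SplitVec.appendEquiv α α α β β β β).toAddMonoidHom.comp (baPlotkinHom fX fY fZ)
  have hC : C = F.range := by
    rw [AddMonoidHom.range_comp, range_baPlotkinHom, AddMonoidHom.map_closure,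
      AddEquiv.coe_toAddMonoidHom, image_blockGens]
  have hF : Function.Injective F :=
    (SplitVec.appendEquiv _ _ _ _ _ _ _).injective.comp (baPlotkinHom_injective fX fY fZ)
  obtain ⟨e⟩ : Nonempty (C ≃+ Vec (γ' + γ''') (δ' + γ'' + 2 * δ'' + δ''')) := by
    rw [show δ' + γ'' + 2 * δ'' + δ''' = δ' + (γ'' + (δ'' + (δ'' + δ'''))) by ring, hC]
    exact ⟨(AddMonoidHom.ofInjective hF).symm.trans (SplitVec.appendEquiv _ _ _ _ _ _ _)⟩
  exact ⟨⟨e⟩, by rw [Nat.card_congr e.toEquiv, card_vec], by ring⟩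
end
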